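/- For the two-loops quiver over ℂ and every n ≥ 1, the linear endomorphism u ↦ [H,u]_Q of ℂ(Q_n||Q_1) is diagonalizable; its eigenvalues are exactly the integers n+1−2l for l = 0, 1, …, n+1, and for each such l the eigenspace of eigenvalue n+1−2l has dimension C(n+1,l). -/

import Mathlib

/-! Two-loops quiver base: one vertex `e`, two loops `a`, `b`.

`Q_n` is the set of words of length `n` in `{a, b}` (all paths are parallel, since
there is a single vertex), and `ℂ(Q_n ∥ Q_1)` is the complex vector space with basis
`Q_n ∥ Q_1 = Q_n × Q_1`. -/

namespace TwoLoops

/-- The two arrows (loops) of the quiver. -/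
inductive TL : Type
  | a : TL
  | b : TL
deriving DecidableEq

instance : Fintype TL := ⟨{TL.a, TL.b}, fun x => by cases x <;> simp⟩

/-- Paths of length `n` in the two-loops quiver: words of length `n` in `{a, b}`. -/
abbrev Wd (n : ℕ) : Type := Fin n → TL

/-- `ℂ(Q_n ∥ Q_1)`: the complex vector space with basis `Q_n ∥ Q_1 = Q_n × Q_1`. -/
abbrev CQ1 (n : ℕ) : Type := (Wd n × TL) → ℂ

/-- `ℂ(Q_n ∥ Q_0)`: basis `Q_n ∥ Q_0 = Q_n` (the unique vertex `e` is omitted). -/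
abbrev CQ0 (n : ℕ) : Type := Wd n → ℂ

/-- The basis element `(γ, x)` of `ℂ(Q_n ∥ Q_1)`. -/
noncomputable def bE {n : ℕ} (γ : Wd n) (x : TL) : CQ1 n := Pi.single (γ, x) (1 : ℂ)

/-- The Gerstenhaber-type bracket `[·,·]_Q` on basis elements, for a degree-one
element `(c,x) ∈ Q_1 ∥ Q_1` against `(γ,y) ∈ Q_n ∥ Q_1`:
`[(c,x),(γ,y)]_Q = δ_{c,y}·(γ,x) − Σ_{i=1}^n δ_{γ_i,x}·(γ ⋄_i c, y)`,
which is the general formula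
`Σ_i (−1)^{(i−1)(m−1)} (α,x)∘_i(β,y) − (−1)^{(n−1)(m−1)} Σ_i (−1)^{(i−1)(n−1)} (β,y)∘_i(α,x)`
specialized to the case where the left argument has degree one (all signs are `+1`;
here `γ ⋄_i c` is the path obtained from `γ` by replacing its `i`-th arrow by `c`). -/
noncomputable def brB {n : ℕ} (P : Wd 1 × TL) (R : Wd n × TL) : CQ1 n :=
  (if P.1 0 = R.2 then bE R.1 P.2 else 0)
    - ∑ i : Fin n,
        (if R.1 i = P.2 then bE (Function.update R.1 i (P.1 0)) R.2 else 0)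

/-- The bracket `[f, ·]_Q` with a degree-one element `f ∈ ℂ(Q_1 ∥ Q_1)`, as a linear
endomorphism of `ℂ(Q_n ∥ Q_1)` (bilinear extension of `brB`). -/
noncomputable def brL {n : ℕ} (f : CQ1 1) : CQ1 n →ₗ[ℂ] CQ1 n :=
  ∑ P : Wd 1 × TL, ∑ R : Wd n × TL,
    f P • ((LinearMap.proj R : CQ1 n →ₗ[ℂ] ℂ).smulRight (brB P R))

/-- `H = (b,b) − (a,a)`. -/
noncomputable def H : CQ1 1 := bE (fun _ => TL.b) TL.b - bE (fun _ => TL.a) TL.a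

/-- `E = (a,b)`. -/
noncomputable def E : CQ1 1 := bE (fun _ => TL.a) TL.b

/-- `F = (b,a)`. -/
noncomputable def F : CQ1 1 := bE (fun _ => TL.b) TL.a

/-- `I = (a,a) + (b,b)`. -/
noncomputable def Iel : CQ1 1 := bE (fun _ => TL.a) TL.a + bE (fun _ => TL.b) TL.b

/-- `D_n` on basis elements: `D_n(γ,e) = (aγ,a) + (bγ,b) + (−1)^{n+1}((γa,a) + (γb,b))`. -/
noncomputable def DB (n : ℕ) (γ : Wd n) : CQ1 (n + 1) :=
  bE (Fin.cons TL.a γ) TL.a + bE (Fin.cons TL.b γ) TL.b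
    + ((-1 : ℂ) ^ (n + 1)) • (bE (Fin.snoc γ TL.a) TL.a + bE (Fin.snoc γ TL.b) TL.b)

/-- The linear map `D_n : ℂ(Q_n ∥ Q_0) → ℂ(Q_{n+1} ∥ Q_1)`. -/
noncomputable def Dmap (n : ℕ) : CQ0 n →ₗ[ℂ] CQ1 (n + 1) :=
  ∑ γ : Wd n, (LinearMap.proj γ : CQ0 n →ₗ[ℂ] ℂ).smulRight (DB n γ)

/-- `a(γ)`: the number of occurrences of the arrow `a` in the path `γ`. -/
def ca {n : ℕ} (γ : Wd n) : ℕ := (Finset.univ.filter fun i => γ i = TL.a).card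

/-- `b(γ)`: the number of occurrences of the arrow `b` in the path `γ`. -/
def cb {n : ℕ} (γ : Wd n) : ℕ := (Finset.univ.filter fun i => γ i = TL.b).card

/-- `v(γ) = a(γ) − b(γ)`. -/
def vv {n : ℕ} (γ : Wd n) : ℤ := (ca γ : ℤ) - (cb γ : ℤ)

end TwoLoops

/-! The bracket with a loop `(x, x)` is diagonal on basis elements:
`[(x,x), (γ,y)]_Q = (δ_{x,y} − #{i | γ_i = x}) • (γ,y)`, because substituting `x` for an
occurrence of `x` leaves `γ` unchanged. Hence `[H, ·]_Q` is diagonal in the basis `Q_n ∥ Q_1`,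
with eigenvalue `n + 1 − 2l` on `(γ,y)`, where `l = level (γ,y)` is the number of `b`s in `γ`
plus one if `y = a`. Appending to `γ` the arrow other than `y` matches the basis elements of
level `l` with the words of length `n + 1` containing exactly `l` letters `b`, of which there
are `C(n+1,l)`. -/

open Module End Matrix Finset

theorem finrank_eigenspace_toLin'_diagonal {ι K : Type*} [Fintype ι] [DecidableEq ι] [Field K]
    (d : ι → K) (μ : K) :
    finrank K (eigenspace (toLin' (diagonal d)) μ) = Nat.card {i // d i = μ} := by
  classical
  set d' : ι → K := fun i => d i - μ
  have hker : eigenspace (toLin' (diagonal d)) μ = LinearMap.ker (toLin' (diagonal d')) := by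
    rw [eigenspace_def, show d' = d - fun _ => μ from rfl, Pi.sub_def, ← diagonal_sub, map_sub]
    congr 2
    ext
    simp [Pi.single_apply]
  have hrange : finrank K (LinearMap.range (toLin' (diagonal d'))) =
      Fintype.card {i // ¬ d i = μ} := by
    have := LinearMap.rank_diagonal d'
    rw [LinearMap.rank, ← finrank_eq_rank, Nat.cast_inj] at this
    simpa [d', sub_eq_zero] using this
  have hsum := LinearMap.finrank_range_add_finrank_ker (toLin' (diagonal d'))
  rw [hrange, finrank_fintype_fun_eq_card, Fintype.card_subtype_compl] at hsum
  have := Fintype.card_subtype_le (fun i => d i = μ)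
  rw [hker, Nat.card_eq_fintype_card]
  omega

lemma natCast_add_one_sub_two_mul_injective {K : Type*} [Field K] [CharZero K] (n : ℕ) :
    Function.Injective fun l : ℕ => (n : K) + 1 - 2 * l := by
  intro k l h
  have : (2 : K) * k = 2 * l := by linear_combination -h
  exact_mod_cast mul_left_cancel₀ two_ne_zero this

namespace TwoLoops

lemma ca_add_cb {n : ℕ} (γ : Wd n) : ca γ + cb γ = n := by
  have hb : univ.filter (fun i => γ i = TL.b) = univ.filter fun i => ¬ γ i = TL.a :=
    Finset.filter_congr fun i _ => by cases γ i <;> simp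
  rw [ca, cb, hb, Finset.card_filter_add_card_filter_not, Finset.card_univ, Fintype.card_fin]

lemma cb_snoc {n : ℕ} (γ : Wd n) (y : TL) :
    cb (Fin.snoc γ y : Wd (n + 1)) = cb γ + if y = TL.b then 1 else 0 := by
  simp only [cb, Finset.card_filter, Fin.sum_univ_castSucc, Fin.snoc_castSucc, Fin.snoc_last]

def wordEquivFinset (m : ℕ) : Wd m ≃ Finset (Fin m) where
  toFun w := {i | w i = TL.b}
  invFun s i := if i ∈ s then TL.b else TL.a
  left_inv w := funext fun i => by cases h : w i <;> simp [h]
  right_inv s := by ext i; by_cases h : i ∈ s <;> simp [h]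

lemma card_cb_eq_choose (m l : ℕ) : Nat.card {w : Wd m // cb w = l} = m.choose l := by
  have e : {w : Wd m // cb w = l} ≃ {s : Finset (Fin m) // s.card = l} :=
    (wordEquivFinset m).subtypeEquiv fun _ => Iff.rfl
  rw [Nat.card_congr e, Nat.card_eq_fintype_card, Fintype.card_finset_len, Fintype.card_fin]

def level {n : ℕ} (R : Wd n × TL) : ℕ := cb R.1 + if R.2 = TL.a then 1 else 0

lemma cb_snoc_swap {n : ℕ} (R : Wd n × TL) :
    cb (Fin.snoc R.1 (Equiv.swap TL.a TL.b R.2) : Wd (n + 1)) = level R := by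
  obtain ⟨γ, x⟩ := R
  cases x <;> simp [cb_snoc, level]

lemma card_level_eq_choose (n l : ℕ) :
    Nat.card {R : Wd n × TL // level R = l} = (n + 1).choose l := by
  let e : Wd n × TL ≃ Wd (n + 1) :=
    ((Equiv.prodComm _ _).trans ((Equiv.swap TL.a TL.b).prodCongr (Equiv.refl _))).trans
      (Fin.snocEquiv fun _ => TL)
  rw [← card_cb_eq_choose, Nat.card_congr (e.subtypeEquiv fun R => ?_)]
  rw [← cb_snoc_swap]
  rfl

lemma level_le {n : ℕ} (R : Wd n × TL) : level R ≤ n + 1 := by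
  have := ca_add_cb R.1
  unfold level
  split_ifs <;> omega

lemma exists_level_eq {n l : ℕ} (hl : l ≤ n + 1) : ∃ R : Wd n × TL, level R = l := by
  have : 0 < Nat.card {R : Wd n × TL // level R = l} := by
    rw [card_level_eq_choose]
    exact Nat.choose_pos hl
  obtain ⟨R, hR⟩ := Nat.card_pos_iff.mp this |>.1
  exact ⟨R, hR⟩

lemma brL_apply {n : ℕ} (f : CQ1 1) (g : CQ1 n) :
    brL f g = ∑ P, f P • ∑ R, g R • brB P R := by
  simp [brL, LinearMap.sum_apply, Finset.smul_sum, smul_smul]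

lemma brB_loop_eq_smul {n : ℕ} (x : TL) (R : Wd n × TL) :
    brB (fun _ => x, x) R =
      ((if x = R.2 then 1 else 0) - #{i | R.1 i = x} : ℂ) • bE R.1 R.2 := by
  have hupd : ∀ i, (if R.1 i = x then bE (Function.update R.1 i x) R.2 else 0) =
      if R.1 i = x then bE R.1 R.2 else 0 := fun i => by
    split_ifs with h
    · rw [← h, Function.update_eq_self]
    · rfl
  simp only [brB, Finset.sum_congr rfl fun i _ => hupd i, Finset.sum_ite, Finset.sum_const_zero,
    add_zero, Finset.sum_const, sub_smul]
  split_ifs with h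
  · subst h; simp [Nat.cast_smul_eq_nsmul]
  · simp [Nat.cast_smul_eq_nsmul]

lemma sum_smul_brB_loop {n : ℕ} (x : TL) (g : CQ1 n) :
    ∑ R, g R • brB (fun _ => x, x) R =
      fun R => ((if x = R.2 then 1 else 0) - #{i | R.1 i = x} : ℂ) * g R := by
  simp only [brB_loop_eq_smul, bE, ← Pi.single_smul', smul_eq_mul, mul_one]
  rw [Finset.univ_sum_single]
  ext R; ring

lemma brL_H_apply {n : ℕ} (g : CQ1 n) (R : Wd n × TL) :
    brL H g R = ((n : ℂ) + 1 - 2 * level R) * g R := by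
  have hH : H = Pi.single (fun _ => TL.b, TL.b) 1 - Pi.single (fun _ => TL.a, TL.a) 1 := rfl
  have hn : (ca R.1 : ℂ) + cb R.1 = n := by exact_mod_cast ca_add_cb R.1
  simp only [brL_apply, hH, Pi.sub_apply, sub_smul, Finset.sum_sub_distrib, Pi.single_apply,
    ite_smul, one_smul, zero_smul, Finset.sum_ite_eq', Finset.mem_univ, if_true, sum_smul_brB_loop]
  rw [← hn, level]
  obtain ⟨γ, x⟩ := R
  cases x <;> simp [ca, cb, eq_comm] <;> ring

lemma brL_H_eq_toLin'_diagonal (n : ℕ) :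
    (brL H : Module.End ℂ (CQ1 n)) = toLin' (diagonal fun R => (n : ℂ) + 1 - 2 * level R) :=
  LinearMap.ext fun g => funext fun R => by rw [brL_H_apply, toLin'_apply, mulVec_diagonal]

theorem stmt6_general (n : ℕ) :
    (⨆ μ : ℂ, Module.End.eigenspace (brL H : Module.End ℂ (CQ1 n)) μ) = ⊤ ∧
    (∀ μ : ℂ, Module.End.HasEigenvalue (brL H : Module.End ℂ (CQ1 n)) μ ↔
      ∃ l : ℕ, l ≤ n + 1 ∧ μ = (n : ℂ) + 1 - 2 * l) ∧
    (∀ l : ℕ, l ≤ n + 1 →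
      Module.finrank ℂ
          (Module.End.eigenspace (brL H : Module.End ℂ (CQ1 n)) ((n : ℂ) + 1 - 2 * l))
        = Nat.choose (n + 1) l) := by
  rw [brL_H_eq_toLin'_diagonal]
  refine ⟨iSup_eigenspace_toLin'_diagonal_eq_top _, fun μ => ?_, fun l _ => ?_⟩
  · rw [hasEigenvalue_toLin'_diagonal_iff]
    constructor
    · rintro ⟨R, rfl⟩
      exact ⟨level R, level_le R, rfl⟩
    · rintro ⟨l, hl, rfl⟩
      obtain ⟨R, rfl⟩ := exists_level_eq hl
      exact ⟨R, rfl⟩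
  · rw [finrank_eigenspace_toLin'_diagonal, ← card_level_eq_choose]
    exact Nat.card_congr <| Equiv.subtypeEquivRight fun R =>
      (natCast_add_one_sub_two_mul_injective n).eq_iff

/-- STATEMENT 6: for every `n ≥ 1`, the endomorphism `u ↦ [H,u]_Q` of `ℂ(Q_n ∥ Q_1)` is
diagonalizable (its eigenspaces span the whole space); its eigenvalues are exactly the
integers `n+1−2l` for `l = 0, 1, …, n+1`; and for each such `l` the eigenspace of the
eigenvalue `n+1−2l` has dimension `C(n+1,l)`. -/
theorem stmt6 (n : ℕ) (hn : 1 ≤ n) :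
    (⨆ μ : ℂ, Module.End.eigenspace (brL H : Module.End ℂ (CQ1 n)) μ) = ⊤ ∧
    (∀ μ : ℂ, Module.End.HasEigenvalue (brL H : Module.End ℂ (CQ1 n)) μ ↔
      ∃ l : ℕ, l ≤ n + 1 ∧ μ = (n : ℂ) + 1 - 2 * l) ∧
    (∀ l : ℕ, l ≤ n + 1 →
      Module.finrank ℂ
          (Module.End.eigenspace (brL H : Module.End ℂ (CQ1 n)) ((n : ℂ) + 1 - 2 * l))
        = Nat.choose (n + 1) l) :=
  stmt6_general n

end TwoLoops
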